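/- arXiv:1106.2775 — 2 statements merged into one kernel-verified Lean document; each statement's English description precedes it below -/
import Mathlib

section
/- Let A be an n×n symmetric matrix, ℓ ∈ ℝ, φ > 0 with A ≻ ℓI and tr((A−ℓI)⁻¹) ≤ φ. Then for every 0 < δ < 1/φ and every x ∈ ℝⁿ, the quadratic form q₂(δ,x) = xᵀ(A−(ℓ+δ)I)⁻²x / tr((A−(ℓ+δ)I)⁻²) satisfies (1−δφ)² q₂(0,x) ≤ q₂(δ,x) ≤ (1−δφ)⁻² q₂(0,x). -/
/-!
Write `A = ∑ λᵢ Pᵢ` spectrally, so that every matrix in the statement is `f(A)` for a scalar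
function `f`. The trace hypothesis bounds each term `(λᵢ - ℓ)⁻¹` of `tr (A - ℓ)⁻¹`, hence
`λᵢ - ℓ ≥ 1/φ`; for such `u = λᵢ - ℓ` one has `u - δ ≥ (1 - δφ) u`, which gives the Loewner bounds
`(A - ℓ)⁻² ≤ (A - ℓ - δ)⁻² ≤ (1 - δφ)⁻² (A - ℓ)⁻²`. Both the quadratic form at `x` and the trace
are monotone for the Loewner order, and comparing the two ratios termwise gives the claim.
-/

open Matrix
open scoped MatrixOrder ComplexOrder

lemma cfc_sub_const {A : Type*} [Ring A] [StarRing A] [TopologicalSpace A] [Algebra ℝ A]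
    [ContinuousFunctionalCalculus ℝ A IsSelfAdjoint] {a : A} (ha : IsSelfAdjoint a) (r : ℝ) :
    cfc (fun t => t - r) a = a - r • 1 := by
  rw [cfc_sub (fun t => t) (fun _ => r) a, cfc_id' ℝ a, cfc_const r a,
    Algebra.algebraMap_eq_smul_one]

lemma div_bounds_of_le_of_le_mul {N₀ N₁ T₀ T₁ K : ℝ} (hN₀ : 0 ≤ N₀) (hT₀ : 0 ≤ T₀)
    (hN : N₀ ≤ N₁) (hNK : N₁ ≤ K * N₀) (hT : T₀ ≤ T₁) (hTK : T₁ ≤ K * T₀) :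
    K⁻¹ * (N₀ / T₀) ≤ N₁ / T₁ ∧ N₁ / T₁ ≤ K * (N₀ / T₀) := by
  rcases hT₀.eq_or_lt with rfl | hT₀
  · obtain rfl : T₁ = 0 := le_antisymm (by simpa using hTK) hT
    simp
  have hT₁ : 0 < T₁ := hT₀.trans_le hT
  constructor
  · calc K⁻¹ * (N₀ / T₀) = N₀ / (K * T₀) := by rw [mul_comm K, ← div_div, div_eq_inv_mul]; ring
      _ ≤ N₁ / T₁ := div_le_div₀ (hN₀.trans hN) hN hT₁ hTK
  · calc N₁ / T₁ ≤ K * N₀ / T₀ := div_le_div₀ ((hN₀.trans hN).trans hNK) hNK hT₀ hT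
      _ = K * (N₀ / T₀) := mul_div_assoc _ _ _

lemma inv_sq_le_inv_sub_sq {u δ : ℝ} (hδ : 0 ≤ δ) (hu : δ < u) :
    (u⁻¹) ^ 2 ≤ ((u - δ)⁻¹) ^ 2 := by
  have hu₀ : 0 < u := hδ.trans_lt hu
  have hu' : 0 < u - δ := sub_pos.mpr hu
  gcongr
  linarith

lemma inv_sub_sq_le {u δ φ : ℝ} (hφ : 0 < φ) (hδ : 0 ≤ δ) (hδφ : δ * φ < 1) (hu : φ⁻¹ ≤ u) :
    ((u - δ)⁻¹) ^ 2 ≤ ((1 - δ * φ)⁻¹) ^ 2 * (u⁻¹) ^ 2 := by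
  have hu₀ : 0 < u := (inv_pos.mpr hφ).trans_le hu
  have hφu : 1 ≤ φ * u := by rwa [inv_le_iff_one_le_mul₀' hφ] at hu
  have hcu : 0 < (1 - δ * φ) * u := mul_pos (sub_pos.mpr hδφ) hu₀
  rw [← mul_pow, ← mul_inv]
  have hcu' : (1 - δ * φ) * u ≤ u - δ := by nlinarith
  have hu' : 0 < u - δ := hcu.trans_le hcu'
  gcongr

namespace Matrix

section Loewner

variable {n : Type*} [Fintype n]

lemma dotProduct_mulVec_le_of_le {P Q : Matrix n n ℝ} (h : P ≤ Q) (x : n → ℝ) :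
    x ⬝ᵥ P *ᵥ x ≤ x ⬝ᵥ Q *ᵥ x := by
  have := (le_iff.mp h).dotProduct_mulVec_nonneg x
  rwa [star_trivial, sub_mulVec, dotProduct_sub, sub_nonneg] at this

lemma trace_le_of_le {P Q : Matrix n n ℝ} (h : P ≤ Q) : P.trace ≤ Q.trace := by
  have := (le_iff.mp h).trace_nonneg
  rwa [trace_sub, sub_nonneg] at this

lemma dotProduct_mulVec_div_trace_bounds {P Q : Matrix n n ℝ} {K : ℝ} (hP : 0 ≤ P)
    (hPQ : P ≤ Q) (hQP : Q ≤ K • P) (x : n → ℝ) :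
    K⁻¹ * (x ⬝ᵥ P *ᵥ x / P.trace) ≤ x ⬝ᵥ Q *ᵥ x / Q.trace ∧
      x ⬝ᵥ Q *ᵥ x / Q.trace ≤ K * (x ⬝ᵥ P *ᵥ x / P.trace) := by
  have hN := dotProduct_mulVec_le_of_le hQP x
  have hT := trace_le_of_le hQP
  rw [smul_mulVec, dotProduct_smul, smul_eq_mul] at hN
  rw [trace_smul, smul_eq_mul] at hT
  exact div_bounds_of_le_of_le_mul (by simpa using dotProduct_mulVec_le_of_le hP x)
    (by simpa using trace_le_of_le hP) (dotProduct_mulVec_le_of_le hPQ x) hN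
    (trace_le_of_le hPQ) hT

end Loewner

section Spectral

variable {n 𝕜 : Type*} [Fintype n] [DecidableEq n] [RCLike 𝕜]

lemma IsHermitian.inv_sub_smul_one_eq_cfc {A : Matrix n n 𝕜} (hA : A.IsHermitian) {r : ℝ}
    (hr : r ∉ spectrum ℝ A) : (A - r • 1)⁻¹ = cfc (fun t => (t - r)⁻¹) A := by
  rw [← cfc_sub_const hA.isSelfAdjoint, nonsing_inv_eq_ringInverse, cfc_inv _ A]
  rintro t ht h
  exact hr (sub_eq_zero.mp h ▸ ht)

lemma IsHermitian.inv_sub_smul_one_pow_eq_cfc {A : Matrix n n 𝕜} (hA : A.IsHermitian) {r : ℝ}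
    (hr : r ∉ spectrum ℝ A) (k : ℕ) : (A - r • 1)⁻¹ ^ k = cfc (fun t => ((t - r)⁻¹) ^ k) A := by
  rw [hA.inv_sub_smul_one_eq_cfc hr, cfc_pow _ _ A ((Set.toFinite _).continuousOn _)]

lemma PosSemidef.le_re_trace_of_mem_spectrum {P : Matrix n n 𝕜} (hP : P.PosSemidef) {t : ℝ}
    (ht : t ∈ spectrum ℝ P) : t ≤ RCLike.re P.trace := by
  obtain ⟨i, rfl⟩ := hP.isHermitian.spectrum_real_eq_range_eigenvalues ▸ ht
  rw [hP.isHermitian.trace_eq_sum_eigenvalues, map_sum]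
  simp only [RCLike.ofReal_re]
  exact Finset.single_le_sum (fun j _ => hP.eigenvalues_nonneg j) (Finset.mem_univ i)

lemma IsHermitian.lt_of_mem_spectrum_of_posDef {A : Matrix n n 𝕜} (hA : A.IsHermitian) {r : ℝ}
    (hpos : (A - r • 1).PosDef) {t : ℝ} (ht : t ∈ spectrum ℝ A) : r < t := by
  have hspec := (StarOrderedRing.isStrictlyPositive_iff_spectrum_pos (R := ℝ) _
    hpos.isHermitian.isSelfAdjoint).mp hpos.isStrictlyPositive
  rw [← cfc_sub_const hA.isSelfAdjoint, cfc_map_spectrum (fun t => t - r) A] at hspec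
  exact sub_pos.mp (hspec _ ⟨t, ht, rfl⟩)

lemma IsHermitian.inv_le_sub_of_mem_spectrum {A : Matrix n n 𝕜} (hA : A.IsHermitian) {r φ : ℝ}
    (hpos : (A - r • 1).PosDef) (htr : RCLike.re (A - r • 1)⁻¹.trace ≤ φ) {t : ℝ}
    (ht : t ∈ spectrum ℝ A) : φ⁻¹ ≤ t - r := by
  have hr : r ∉ spectrum ℝ A := fun h => lt_irrefl r (hA.lt_of_mem_spectrum_of_posDef hpos h)
  have hinv : (t - r)⁻¹ ∈ spectrum ℝ (A - r • 1)⁻¹ := by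
    rw [hA.inv_sub_smul_one_eq_cfc hr,
      cfc_map_spectrum (fun t => (t - r)⁻¹) A (hf := (Set.toFinite _).continuousOn _)]
    exact ⟨t, ht, rfl⟩
  exact inv_le_of_inv_le₀ (sub_pos.mpr (hA.lt_of_mem_spectrum_of_posDef hpos ht))
    ((hpos.inv.posSemidef.le_re_trace_of_mem_spectrum hinv).trans htr)

end Spectral

end Matrix

theorem regularity_q2 {n : ℕ} (A : Matrix (Fin n) (Fin n) ℝ) (hA : A.IsSymm)
    (ℓ φ δ : ℝ) (hφ : 0 < φ)
    (hpos : (A - ℓ • (1 : Matrix (Fin n) (Fin n) ℝ)).PosDef)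
    (htr : (A - ℓ • (1 : Matrix (Fin n) (Fin n) ℝ))⁻¹.trace ≤ φ)
    (hδ : 0 < δ) (hδφ : δ < 1 / φ) (x : Fin n → ℝ) :
    (1 - δ * φ) ^ 2 * ((x ⬝ᵥ ((A - ℓ • 1)⁻¹ ^ 2).mulVec x)
        / ((A - ℓ • (1 : Matrix (Fin n) (Fin n) ℝ))⁻¹ ^ 2).trace)
      ≤ (x ⬝ᵥ ((A - (ℓ + δ) • 1)⁻¹ ^ 2).mulVec x)
        / ((A - (ℓ + δ) • (1 : Matrix (Fin n) (Fin n) ℝ))⁻¹ ^ 2).trace ∧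
    (x ⬝ᵥ ((A - (ℓ + δ) • 1)⁻¹ ^ 2).mulVec x)
        / ((A - (ℓ + δ) • (1 : Matrix (Fin n) (Fin n) ℝ))⁻¹ ^ 2).trace
      ≤ ((1 - δ * φ)⁻¹) ^ 2 * ((x ⬝ᵥ ((A - ℓ • 1)⁻¹ ^ 2).mulVec x)
        / ((A - ℓ • (1 : Matrix (Fin n) (Fin n) ℝ))⁻¹ ^ 2).trace) := by
  have hAh : A.IsHermitian := isHermitian_iff_isSymm.mpr hA
  have hgap (t : ℝ) (ht : t ∈ spectrum ℝ A) : φ⁻¹ ≤ t - ℓ :=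
    hAh.inv_le_sub_of_mem_spectrum hpos htr ht
  have hδgap (t : ℝ) (ht : t ∈ spectrum ℝ A) : δ < t - ℓ := (one_div φ ▸ hδφ).trans_le (hgap t ht)
  have hℓ : ℓ ∉ spectrum ℝ A := fun h => by simpa using hδ.trans (hδgap ℓ h)
  have hℓδ : ℓ + δ ∉ spectrum ℝ A := fun h => by simpa using hδgap _ h
  have hcont (f : ℝ → ℝ) : ContinuousOn f (spectrum ℝ A) := (Set.toFinite _).continuousOn f
  have hshift (t : ℝ) : t - (ℓ + δ) = (t - ℓ) - δ := sub_add_eq_sub_sub t ℓ δ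
  rw [hAh.inv_sub_smul_one_pow_eq_cfc hℓ, hAh.inv_sub_smul_one_pow_eq_cfc hℓδ]
  have hbounds := dotProduct_mulVec_div_trace_bounds (K := ((1 - δ * φ)⁻¹) ^ 2)
    (cfc_nonneg fun t _ => sq_nonneg ((t - ℓ)⁻¹))
    (cfc_mono (fun t ht => hshift t ▸ inv_sq_le_inv_sub_sq hδ.le (hδgap t ht)) (hcont _) (hcont _))
    (by
      rw [← cfc_const_mul _ _ A (hcont _)]
      exact cfc_mono (fun t ht => hshift t ▸ inv_sub_sq_le hφ hδ.le ((lt_div_iff₀ hφ).mp hδφ)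
        (hgap t ht)) (hcont _) (hcont _)) x
  simpa only [inv_pow, inv_inv] using hbounds
end

section
/- Let A be an n×n symmetric matrix, ℓ ∈ ℝ, φ > 0 with A ≻ ℓI and tr((A−ℓI)⁻¹) = φ, and let x ∈ ℝⁿ. For t ∈ (0,1), define δ := (1−t)³ q₂(0,x) · 1{q₁(0,x) ≤ t} · 1{q₂(0,x) ≤ t/φ}, where q₁(0,x) = xᵀ(A−ℓI)⁻¹x and q₂(0,x) = xᵀ(A−ℓI)⁻²x / tr((A−ℓI)⁻²). Then A ≻ (ℓ+δ)I and tr((A + xxᵀ − (ℓ+δ)I)⁻¹) ≤ tr((A − ℓI)⁻¹). -/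
/-!
Diagonalize `A - ℓ • 1 = U diag(μ) Uᵀ` and put `y = Uᵀ x`, `Q = ∑ μᵢ⁻² yᵢ²`, `T = ∑ μᵢ⁻²`, so that
`δ = (1-t)³ Q / T` when it is nonzero. By Sherman–Morrison,
`tr((A + xxᵀ - (ℓ+δ) • 1)⁻¹) = ∑ (μᵢ-δ)⁻¹ - (∑ (μᵢ-δ)⁻² yᵢ²) / (1 + ∑ (μᵢ-δ)⁻¹ yᵢ²)`.
Since `μᵢ⁻¹ ≤ φ`, the condition `Q / T ≤ t / φ` gives `δ ≤ t μᵢ`, i.e. `μᵢ - δ ≥ (1-t) μᵢ`.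
Hence the shift raises `∑ (μᵢ-δ)⁻¹` by at most `δ T / (1-t) = (1-t)² Q`, while `q₁ ≤ t` bounds the
denominator by `(1-t)⁻¹`, so the rank-one term removes at least `(1-t) Q`.
-/

open Matrix Finset

namespace Matrix

variable {K : Type*} [Field K] {ι : Type*} [Fintype ι] [DecidableEq ι]

theorem inv_add_vecMulVec {M : Matrix ι ι K} (hM : IsUnit M) (x y : ι → K)
    (hc : 1 + y ⬝ᵥ M⁻¹ *ᵥ x ≠ 0) :
    (M + vecMulVec x y)⁻¹ =
      M⁻¹ - (1 + y ⬝ᵥ M⁻¹ *ᵥ x)⁻¹ • vecMulVec (M⁻¹ *ᵥ x) (y ᵥ* M⁻¹) := by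
  have hMM : M * M⁻¹ = 1 := mul_nonsing_inv M ((isUnit_iff_isUnit_det M).mp hM)
  refine inv_eq_right_inv ?_
  have hcoeff : (1 + y ⬝ᵥ M⁻¹ *ᵥ x)⁻¹ * (y ⬝ᵥ M⁻¹ *ᵥ x) = 1 - (1 + y ⬝ᵥ M⁻¹ *ᵥ x)⁻¹ := by
    field_simp; ring
  rw [add_mul, mul_sub, mul_sub, hMM, Matrix.mul_smul, Matrix.mul_smul, mul_vecMulVec,
    mulVec_mulVec, hMM, one_mulVec, vecMulVec_mul, vecMulVec_mul_vecMulVec, vecMulVec_smul,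
    smul_smul, hcoeff]
  module

theorem trace_inv_add_vecMulVec {M : Matrix ι ι K} (hM : IsUnit M) (x y : ι → K)
    (hc : 1 + y ⬝ᵥ M⁻¹ *ᵥ x ≠ 0) :
    (M + vecMulVec x y)⁻¹.trace =
      M⁻¹.trace - (y ⬝ᵥ (M⁻¹ ^ 2) *ᵥ x) / (1 + y ⬝ᵥ M⁻¹ *ᵥ x) := by
  rw [inv_add_vecMulVec hM x y hc, trace_sub, trace_smul, trace_vecMulVec,
    dotProduct_comm (M⁻¹ *ᵥ x), ← dotProduct_mulVec, mulVec_mulVec, sq, smul_eq_mul,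
    inv_mul_eq_div]

end Matrix

namespace Matrix.IsHermitian

open Unitary
open scoped ComplexOrder

variable {𝕜 : Type*} [RCLike 𝕜] {n : Type*} [Fintype n] [DecidableEq n]
  {A : Matrix n n 𝕜} (hA : A.IsHermitian)

lemma cfc_mul_cfc (f g : ℝ → ℝ) : hA.cfc f * hA.cfc g = hA.cfc (fun s => f s * g s) := by
  simp only [IsHermitian.cfc, ← map_mul, diagonal_mul_diagonal]
  congr 2; ext; simp

lemma cfc_pow (f : ℝ → ℝ) (k : ℕ) : hA.cfc f ^ k = hA.cfc (fun s => f s ^ k) := by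
  simp only [IsHermitian.cfc, ← map_pow, diagonal_pow]
  congr 2; ext; simp

lemma inv_cfc {f : ℝ → ℝ} (hf : ∀ i, f (hA.eigenvalues i) ≠ 0) :
    (hA.cfc f)⁻¹ = hA.cfc (fun s => (f s)⁻¹) := by
  refine inv_eq_right_inv ?_
  rw [cfc_mul_cfc, IsHermitian.cfc, ← map_one (conjStarAlgAut 𝕜 _ hA.eigenvectorUnitary),
    ← diagonal_one]
  congr 2; ext i; simp [hf i]

lemma trace_cfc (f : ℝ → ℝ) : (hA.cfc f).trace = ∑ i, (f (hA.eigenvalues i) : 𝕜) := by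
  rw [IsHermitian.cfc, conjStarAlgAut_apply, trace_mul_cycle, coe_star_mul_self, one_mul,
    trace_diagonal]
  rfl

lemma posDef_cfc {f : ℝ → ℝ} (hf : ∀ i, 0 < f (hA.eigenvalues i)) : (hA.cfc f).PosDef := by
  rw [IsHermitian.cfc, conjStarAlgAut_apply, isUnit_coe.posDef_star_right_conjugate_iff]
  simp [hf]

lemma cfc_sub_const (c : ℝ) : hA.cfc (fun s => s - c) = A - c • 1 := by
  rw [← cfc_eq, cfc_sub .., cfc_id' .., cfc_const .., Algebra.algebraMap_eq_smul_one]

lemma cfc_id : hA.cfc id = A := by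
  rw [show (id : ℝ → ℝ) = fun s => s - 0 from funext fun s => (sub_zero s).symm,
    cfc_sub_const, zero_smul, sub_zero]

end Matrix.IsHermitian

lemma Matrix.IsHermitian.dotProduct_cfc_mulVec {n : Type*} [Fintype n] [DecidableEq n]
    {A : Matrix n n ℝ} (hA : A.IsHermitian) (f : ℝ → ℝ) (x : n → ℝ) :
    x ⬝ᵥ hA.cfc f *ᵥ x =
      ∑ i, f (hA.eigenvalues i) * (star (hA.eigenvectorUnitary : Matrix n n ℝ) *ᵥ x) i ^ 2 := by
  rw [IsHermitian.cfc, Unitary.conjStarAlgAut_apply, ← mulVec_mulVec, ← mulVec_mulVec,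
    dotProduct_mulVec, ← mulVec_transpose]
  simp [dotProduct, mulVec_diagonal, sq, mul_left_comm, star_eq_conjTranspose]

section ShiftedInverse

variable {a δ t : ℝ}

lemma inv_sub_le_inv_div_one_sub (ha : 0 < a) (ht : t < 1) (hδ : δ ≤ t * a) :
    (a - δ)⁻¹ ≤ a⁻¹ / (1 - t) := by
  rw [div_eq_mul_inv, ← mul_inv]
  exact inv_anti₀ (by nlinarith) (by nlinarith)

lemma inv_sub_le_inv_add (ha : 0 < a) (ht : t < 1) (hδ0 : 0 ≤ δ) (hδ : δ ≤ t * a) :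
    (a - δ)⁻¹ ≤ a⁻¹ + δ / (1 - t) * a⁻¹ ^ 2 := by
  have hsub : 0 < a - δ := by nlinarith
  have hdiff : (a - δ)⁻¹ = a⁻¹ + δ * (a⁻¹ * (a - δ)⁻¹) := by
    field_simp; ring
  calc (a - δ)⁻¹ = a⁻¹ + δ * (a⁻¹ * (a - δ)⁻¹) := hdiff
    _ ≤ a⁻¹ + δ * (a⁻¹ * (a⁻¹ / (1 - t))) := by
      gcongr; exact inv_sub_le_inv_div_one_sub ha ht hδ
    _ = a⁻¹ + δ / (1 - t) * a⁻¹ ^ 2 := by ring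

end ShiftedInverse

section FeasibleShift

variable {ι : Type*} [Fintype ι] {μ y : ι → ℝ} {δ t : ℝ}

lemma sum_inv_sub_sub_le (hμ : ∀ i, 0 < μ i) (ht : t ∈ Set.Ioo (0 : ℝ) 1) (hδ0 : 0 ≤ δ)
    (hδμ : ∀ i, δ ≤ t * μ i) (hq₁ : ∑ i, (μ i)⁻¹ * y i ^ 2 ≤ t)
    (hq₂ : δ * ∑ i, (μ i)⁻¹ ^ 2 ≤ (1 - t) ^ 3 * ∑ i, (μ i)⁻¹ ^ 2 * y i ^ 2) :
    ∑ i, (μ i - δ)⁻¹ - (∑ i, (μ i - δ)⁻¹ ^ 2 * y i ^ 2) / (1 + ∑ i, (μ i - δ)⁻¹ * y i ^ 2)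
      ≤ ∑ i, (μ i)⁻¹ := by
  obtain ⟨ht0, ht1⟩ := ht
  have h1t : 0 < 1 - t := by linarith
  have hgap : ∀ i, 0 < μ i - δ := fun i => by nlinarith [hμ i, hδμ i]
  set T := ∑ i, (μ i)⁻¹ ^ 2
  set q₂ := ∑ i, (μ i)⁻¹ ^ 2 * y i ^ 2
  have htrace : ∑ i, (μ i - δ)⁻¹ ≤ ∑ i, (μ i)⁻¹ + δ / (1 - t) * T := by
    rw [mul_sum, ← sum_add_distrib]
    exact sum_le_sum fun i _ => inv_sub_le_inv_add (hμ i) ht1 hδ0 (hδμ i)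
  have hq₂ : 0 ≤ q₂ := by positivity
  have hgain : δ / (1 - t) * T ≤ (1 - t) * q₂ := by
    rw [div_mul_eq_mul_div, div_le_iff₀ h1t]
    nlinarith [mul_nonneg (mul_nonneg (sq_nonneg (1 - t)) hq₂) ht0.le]
  have hden : 1 + ∑ i, (μ i - δ)⁻¹ * y i ^ 2 ≤ (1 - t)⁻¹ :=
    calc 1 + ∑ i, (μ i - δ)⁻¹ * y i ^ 2 ≤ 1 + ∑ i, (μ i)⁻¹ / (1 - t) * y i ^ 2 := by
          gcongr with i; exact inv_sub_le_inv_div_one_sub (hμ i) ht1 (hδμ i)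
      _ = 1 + (∑ i, (μ i)⁻¹ * y i ^ 2) / (1 - t) := by
          simp only [sum_div, div_mul_eq_mul_div]
      _ ≤ 1 + t / (1 - t) := by gcongr
      _ = (1 - t)⁻¹ := by field_simp; ring
  have hnum : q₂ ≤ ∑ i, (μ i - δ)⁻¹ ^ 2 * y i ^ 2 := by
    refine sum_le_sum fun i _ => ?_
    have hinv : (μ i)⁻¹ ≤ (μ i - δ)⁻¹ := inv_anti₀ (hgap i) (by linarith)
    exact mul_le_mul_of_nonneg_right (pow_le_pow_left₀ (inv_pos.2 (hμ i)).le hinv 2)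
      (sq_nonneg _)
  have hquot : (1 - t) * q₂ ≤
      (∑ i, (μ i - δ)⁻¹ ^ 2 * y i ^ 2) / (1 + ∑ i, (μ i - δ)⁻¹ * y i ^ 2) := by
    rw [mul_comm, ← div_inv_eq_mul]
    have hr₁ : 0 ≤ ∑ i, (μ i - δ)⁻¹ * y i ^ 2 :=
      sum_nonneg fun i _ => mul_nonneg (inv_nonneg.2 (hgap i).le) (sq_nonneg _)
    exact div_le_div₀ (hq₂.trans hnum) hnum (by linarith) hden
  linarith

variable (μ y t)

/-- The shift `δ` of the statement in an eigenbasis of `A - ℓ • 1`: `μ` are the eigenvalues and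
`y` the coordinates of `x`. -/
noncomputable def feasibleShift : ℝ :=
  if ∑ i, (μ i)⁻¹ * y i ^ 2 ≤ t ∧
      (∑ i, (μ i)⁻¹ ^ 2 * y i ^ 2) / ∑ i, (μ i)⁻¹ ^ 2 ≤ t / ∑ i, (μ i)⁻¹
  then (1 - t) ^ 3 * ((∑ i, (μ i)⁻¹ ^ 2 * y i ^ 2) / ∑ i, (μ i)⁻¹ ^ 2) else 0

variable {μ y t}

lemma feasibleShift_nonneg (ht : t ≤ 1) : 0 ≤ feasibleShift μ y t := by
  unfold feasibleShift
  split_ifs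
  · have : 0 ≤ 1 - t := by linarith
    positivity
  · exact le_rfl

lemma feasibleShift_le_mul (hμ : ∀ i, 0 < μ i) (ht : t ∈ Set.Ioo (0 : ℝ) 1) (i : ι) :
    feasibleShift μ y t ≤ t * μ i := by
  obtain ⟨ht0, ht1⟩ := ht
  unfold feasibleShift
  split_ifs with h
  · have hμi : (μ i)⁻¹ ≤ ∑ j, (μ j)⁻¹ :=
      single_le_sum (fun j _ => (inv_pos.2 (hμ j)).le) (mem_univ i)
    calc (1 - t) ^ 3 * ((∑ i, (μ i)⁻¹ ^ 2 * y i ^ 2) / ∑ i, (μ i)⁻¹ ^ 2)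
        ≤ 1 * (t / ∑ j, (μ j)⁻¹) :=
          mul_le_mul (pow_le_one₀ (by linarith) (by linarith)) h.2 (by positivity) zero_le_one
      _ ≤ t / (μ i)⁻¹ := by
          rw [one_mul]; exact div_le_div_of_nonneg_left ht0.le (inv_pos.2 (hμ i)) hμi
      _ = t * μ i := div_inv_eq_mul t (μ i)
  · exact mul_nonneg ht0.le (hμ i).le

lemma feasibleShift_lt (hμ : ∀ i, 0 < μ i) (ht : t ∈ Set.Ioo (0 : ℝ) 1) (i : ι) :
    feasibleShift μ y t < μ i :=
  (feasibleShift_le_mul hμ ht i).trans_lt (mul_lt_of_lt_one_left (hμ i) ht.2)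

lemma feasibleShift_mul_sum_inv_sq_le (ht : t ≤ 1) :
    feasibleShift μ y t * ∑ i, (μ i)⁻¹ ^ 2 ≤ (1 - t) ^ 3 * ∑ i, (μ i)⁻¹ ^ 2 * y i ^ 2 := by
  have : 0 ≤ 1 - t := by linarith
  unfold feasibleShift
  split_ifs
  · rw [mul_assoc]
    gcongr
    by_cases hT : ∑ i, (μ i)⁻¹ ^ 2 = 0
    · rw [hT, mul_zero]; positivity
    · rw [div_mul_cancel₀ _ hT]
  · rw [zero_mul]; positivity

theorem sum_inv_sub_feasibleShift_le (hμ : ∀ i, 0 < μ i) (ht : t ∈ Set.Ioo (0 : ℝ) 1) :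
    ∑ i, (μ i - feasibleShift μ y t)⁻¹ -
        (∑ i, (μ i - feasibleShift μ y t)⁻¹ ^ 2 * y i ^ 2) /
          (1 + ∑ i, (μ i - feasibleShift μ y t)⁻¹ * y i ^ 2)
      ≤ ∑ i, (μ i)⁻¹ := by
  by_cases hcond : ∑ i, (μ i)⁻¹ * y i ^ 2 ≤ t ∧
      (∑ i, (μ i)⁻¹ ^ 2 * y i ^ 2) / ∑ i, (μ i)⁻¹ ^ 2 ≤ t / ∑ i, (μ i)⁻¹
  · exact sum_inv_sub_sub_le hμ ht (feasibleShift_nonneg ht.2.le) (feasibleShift_le_mul hμ ht)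
      hcond.1 (feasibleShift_mul_sum_inv_sq_le ht.2.le)
  · have hzero : feasibleShift μ y t = 0 := if_neg hcond
    have hden : 0 ≤ 1 + ∑ i, (μ i)⁻¹ * y i ^ 2 :=
      add_nonneg zero_le_one (sum_nonneg fun i _ => mul_nonneg (inv_pos.2 (hμ i)).le (sq_nonneg _))
    simp only [hzero, sub_zero]
    exact sub_le_self _ (div_nonneg (by positivity) hden)

end FeasibleShift

open scoped Classical

theorem explicit_feasible_shift_general {n : ℕ} (A : Matrix (Fin n) (Fin n) ℝ)
    (ℓ φ t : ℝ) (ht : t ∈ Set.Ioo (0 : ℝ) 1)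
    (hpos : (A - ℓ • (1 : Matrix (Fin n) (Fin n) ℝ)).PosDef)
    (htr : (A - ℓ • (1 : Matrix (Fin n) (Fin n) ℝ))⁻¹.trace = φ)
    (x : Fin n → ℝ) (δ : ℝ)
    (hδ : δ = if (x ⬝ᵥ ((A - ℓ • 1)⁻¹).mulVec x ≤ t ∧
          (x ⬝ᵥ ((A - ℓ • 1)⁻¹ ^ 2).mulVec x)
            / ((A - ℓ • (1 : Matrix (Fin n) (Fin n) ℝ))⁻¹ ^ 2).trace ≤ t / φ)
        then (1 - t) ^ 3 * ((x ⬝ᵥ ((A - ℓ • 1)⁻¹ ^ 2).mulVec x)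
            / ((A - ℓ • (1 : Matrix (Fin n) (Fin n) ℝ))⁻¹ ^ 2).trace)
        else 0) :
    (A - (ℓ + δ) • (1 : Matrix (Fin n) (Fin n) ℝ)).PosDef ∧
    (A + vecMulVec x x - (ℓ + δ) • 1)⁻¹.trace ≤ (A - ℓ • 1)⁻¹.trace := by
  set B := A - ℓ • (1 : Matrix (Fin n) (Fin n) ℝ) with hB_def
  have hB : B.IsHermitian := hpos.1
  have hμ := hpos.eigenvalues_pos
  have hBinv : B⁻¹ = hB.cfc (·⁻¹) := by
    conv_lhs => rw [← hB.cfc_id]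
    exact hB.inv_cfc fun i => (hμ i).ne'
  rw [hBinv, hB.cfc_pow, hB.trace_cfc, hB.dotProduct_cfc_mulVec, hB.dotProduct_cfc_mulVec] at hδ
  rw [hBinv, hB.trace_cfc] at htr
  subst htr
  set y := star (hB.eigenvectorUnitary : Matrix (Fin n) (Fin n) ℝ) *ᵥ x
  replace hδ : δ = feasibleShift hB.eigenvalues y t := hδ
  subst hδ
  set δ := feasibleShift hB.eigenvalues y t
  have hgap : ∀ i, 0 < hB.eigenvalues i - δ := fun i => sub_pos.2 (feasibleShift_lt hμ ht i)
  have hC : A - (ℓ + δ) • 1 = hB.cfc (· - δ) := by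
    rw [hB.cfc_sub_const, hB_def, add_smul, sub_sub]
  have hCpos : (A - (ℓ + δ) • 1).PosDef := hC ▸ hB.posDef_cfc hgap
  refine ⟨hCpos, ?_⟩
  have hCinv : (A - (ℓ + δ) • 1)⁻¹ = hB.cfc (fun s => (s - δ)⁻¹) := by
    rw [hC, hB.inv_cfc fun i => (hgap i).ne']
  have hc : 1 + x ⬝ᵥ (A - (ℓ + δ) • 1)⁻¹ *ᵥ x ≠ 0 := by
    have hq := hCpos.inv.posSemidef.dotProduct_mulVec_nonneg x
    rw [star_trivial] at hq
    exact (add_pos_of_pos_of_nonneg one_pos hq).ne'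
  rw [add_sub_right_comm, trace_inv_add_vecMulVec hCpos.isUnit x x hc, hCinv, hB.cfc_pow,
    hB.trace_cfc, hB.dotProduct_cfc_mulVec, hB.dotProduct_cfc_mulVec, hBinv, hB.trace_cfc]
  exact sum_inv_sub_feasibleShift_le hμ ht

theorem explicit_feasible_shift {n : ℕ} (A : Matrix (Fin n) (Fin n) ℝ) (hA : A.IsSymm)
    (ℓ φ t : ℝ) (hφ : 0 < φ) (ht : t ∈ Set.Ioo (0 : ℝ) 1)
    (hpos : (A - ℓ • (1 : Matrix (Fin n) (Fin n) ℝ)).PosDef)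
    (htr : (A - ℓ • (1 : Matrix (Fin n) (Fin n) ℝ))⁻¹.trace = φ)
    (x : Fin n → ℝ) (δ : ℝ)
    (hδ : δ = if (x ⬝ᵥ ((A - ℓ • 1)⁻¹).mulVec x ≤ t ∧
          (x ⬝ᵥ ((A - ℓ • 1)⁻¹ ^ 2).mulVec x)
            / ((A - ℓ • (1 : Matrix (Fin n) (Fin n) ℝ))⁻¹ ^ 2).trace ≤ t / φ)
        then (1 - t) ^ 3 * ((x ⬝ᵥ ((A - ℓ • 1)⁻¹ ^ 2).mulVec x)
            / ((A - ℓ • (1 : Matrix (Fin n) (Fin n) ℝ))⁻¹ ^ 2).trace)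
        else 0) :
    (A - (ℓ + δ) • (1 : Matrix (Fin n) (Fin n) ℝ)).PosDef ∧
    (A + vecMulVec x x - (ℓ + δ) • 1)⁻¹.trace ≤ (A - ℓ • 1)⁻¹.trace :=
  explicit_feasible_shift_general A ℓ φ t ht hpos htr x δ hδ
end
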